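/- Let e be a Boolean Dice expression with free variables x1,...,xn and suppose e ⤳ (φ, γ, w). Then for any Boolean values v1,...,vn: (1) the accepting semantics satisfies ⟦e[xi ↦ vi]⟧_A = WMC(γ[xi ↦ vi], w); and (2) for any Boolean value v, the distributional semantics satisfies ⟦e[xi ↦ vi]⟧_D(v) = WMC(((φ ⇔ v) ∧ γ)[xi ↦ vi], w) / WMC(γ[xi ↦ vi], w), where a quotient with zero denominator is defined to be 0. -/

import Mathlib

/-! The Boolean fragment of the Dice language, its unnormalized denotational
semantics, its compilation to weighted Boolean formulas, and the correctness
statement relating the two via weighted model counting. -/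

/-- Atomic expressions: Boolean constants and variables. -/
inductive AExp : Type
  | const : Bool → AExp
  | var : String → AExp

/-- Boolean Dice expressions:
`e ::= true | false | x | flip θ | observe a | if a then e1 else e2 | let x = e1 in e2`. -/
inductive BExp : Type
  | atom : AExp → BExp
  | flip : ℝ → BExp
  | obs : AExp → BExp
  | ite : AExp → BExp → BExp → BExp
  | letin : String → BExp → BExp → BExp

/-- Substitution of Boolean values for free variables in an atomic expression
(`ρ x = some b` means `x` is replaced by the constant `b`). -/
def AExp.substEnv (ρ : String → Option Bool) : AExp → AExp
  | .const b => .const b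
  | .var x => match ρ x with
      | some b => .const b
      | none => .var x

/-- Capture-avoiding substitution of Boolean values for free variables:
`e[xi ↦ vi]`, for the substitution described by `ρ`. -/
def BExp.substEnv (ρ : String → Option Bool) : BExp → BExp
  | .atom a => .atom (a.substEnv ρ)
  | .flip θ => .flip θ
  | .obs a => .obs (a.substEnv ρ)
  | .ite a e1 e2 => .ite (a.substEnv ρ) (e1.substEnv ρ) (e2.substEnv ρ)
  | .letin x e1 e2 =>
      .letin x (e1.substEnv ρ) (e2.substEnv (fun y => if y = x then none else ρ y))

/-- Size of an expression (used for termination of the semantics). -/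
def BExp.size : BExp → ℕ
  | .atom _ => 1
  | .flip _ => 1
  | .obs _ => 1
  | .ite _ e1 e2 => e1.size + e2.size + 1
  | .letin _ e1 e2 => e1.size + e2.size + 1

theorem BExp.size_substEnv (ρ : String → Option Bool) (e : BExp) :
    (e.substEnv ρ).size = e.size := by
  induction e generalizing ρ <;> simp [BExp.substEnv, BExp.size, *]

/-- The unnormalized denotational semantics `⟦e⟧ : Bool → ℝ` of a (closed)
Boolean Dice expression:
* `⟦v1⟧(v) = 1` if `v = v1` and `0` otherwise;
* `⟦flip θ⟧(true) = θ` and `⟦flip θ⟧(false) = 1 − θ`;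
* `⟦observe v1⟧(v) = 1` if `v1 = true` and `v = true`, else `0`;
* `⟦if true then e1 else e2⟧ = ⟦e1⟧`, `⟦if false then e1 else e2⟧ = ⟦e2⟧`;
* `⟦let x = e1 in e2⟧(v) = Σ_{v'} ⟦e1⟧(v') · ⟦e2[x ↦ v']⟧(v)`.
(Expressions that still contain free variables in evaluation position get the
always-zero semantics, for totality.) -/
noncomputable def BExp.sem : BExp → Bool → ℝ
  | .atom (.const b), v => if v = b then 1 else 0
  | .atom (.var _), _ => 0
  | .flip θ, v => if v then θ else 1 - θ
  | .obs (.const true), v => if v then 1 else 0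
  | .obs _, _ => 0
  | .ite (.const true) e1 _, v => e1.sem v
  | .ite (.const false) _ e2, v => e2.sem v
  | .ite (.var _) _ _, _ => 0
  | .letin x e1 e2, v =>
      ∑ v' : Bool,
        e1.sem v' * (e2.substEnv (fun y => if y = x then some v' else none)).sem v
termination_by e _ => e.size
decreasing_by all_goals · simp [BExp.size, BExp.size_substEnv] <;> omega

/-- Propositional formulas over flip variables (numbered by `ℕ`) and program
variables (named by `String`). -/
inductive Form : Type
  | tt : Form
  | ff : Form
  | fvar : ℕ → Form
  | pvar : String → Form
  | not : Form → Form
  | and : Form → Form → Form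
  | or : Form → Form → Form
  | iff : Form → Form → Form

/-- Evaluation of a formula under truth assignments for flip and program
variables. -/
def Form.eval (σ : ℕ → Bool) (ρ : String → Bool) : Form → Bool
  | .tt => true
  | .ff => false
  | .fvar i => σ i
  | .pvar x => ρ x
  | .not φ => !(φ.eval σ ρ)
  | .and φ ψ => φ.eval σ ρ && ψ.eval σ ρ
  | .or φ ψ => φ.eval σ ρ || ψ.eval σ ρ
  | .iff φ ψ => φ.eval σ ρ == ψ.eval σ ρ

/-- Logical substitution `φ[x ↦ ψ]` of a formula for a program variable. -/
def Form.psubst : Form → String → Form → Form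
  | .tt, _, _ => .tt
  | .ff, _, _ => .ff
  | .fvar i, _, _ => .fvar i
  | .pvar y, x, ψ => if y = x then ψ else .pvar y
  | .not φ, x, ψ => .not (φ.psubst x ψ)
  | .and φ1 φ2, x, ψ => .and (φ1.psubst x ψ) (φ2.psubst x ψ)
  | .or φ1 φ2, x, ψ => .or (φ1.psubst x ψ) (φ2.psubst x ψ)
  | .iff φ1 φ2, x, ψ => .iff (φ1.psubst x ψ) (φ2.psubst x ψ)

/-- Substitution `[xi ↦ vi]` of Boolean values for the program variables of a
formula (every program variable is replaced by the constant it is mapped to). -/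
def Form.substProg (ρ : String → Bool) : Form → Form
  | .tt => .tt
  | .ff => .ff
  | .fvar i => .fvar i
  | .pvar x => if ρ x then .tt else .ff
  | .not φ => .not (φ.substProg ρ)
  | .and φ ψ => .and (φ.substProg ρ) (ψ.substProg ρ)
  | .or φ ψ => .or (φ.substProg ρ) (ψ.substProg ρ)
  | .iff φ ψ => .iff (φ.substProg ρ) (ψ.substProg ρ)

/-- A Boolean value as a constant formula. -/
def Form.ofBool : Bool → Form
  | true => .tt
  | false => .ff

/-- Compilation of an atomic expression to its unnormalized formula. -/
def AExp.comp : AExp → Form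
  | .const true => .tt
  | .const false => .ff
  | .var x => .pvar x

/-- The compilation relation `e ⤳ (φ, γ, w)` of Boolean Dice expressions to
weighted Boolean formulas, producing the unnormalized formula `φ`, the
accepting formula `γ`, and the weight function `w`.  Freshness of flip
variables is modeled by threading a counter: `Comp e n m φ γ w` means `e`
compiles using the fresh flip variables `n, n+1, …, m−1`; the weight function
`w` is a single global function constrained at each flip variable (the union of
weight functions with disjoint domains). -/
inductive Comp : BExp → ℕ → ℕ → Form → Form → (ℕ → Bool → ℝ) → Prop
  | atom (a : AExp) (n : ℕ) (w : ℕ → Bool → ℝ) :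
      Comp (.atom a) n n a.comp .tt w
  | flip (θ : ℝ) (n : ℕ) (w : ℕ → Bool → ℝ)
      (h0 : 0 ≤ θ) (h1 : θ ≤ 1)
      (hwt : w n true = θ) (hwf : w n false = 1 - θ) :
      Comp (.flip θ) n (n + 1) (.fvar n) .tt w
  | obs (a : AExp) (n : ℕ) (w : ℕ → Bool → ℝ) :
      Comp (.obs a) n n .tt a.comp w
  | ite (a : AExp) (eT eE : BExp) (φT γT φE γE : Form) (n m k : ℕ)
      (w : ℕ → Bool → ℝ)
      (hT : Comp eT n m φT γT w) (hE : Comp eE m k φE γE w) :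
      Comp (.ite a eT eE) n k
        (.or (.and a.comp φT) (.and (.not a.comp) φE))
        (.or (.and a.comp γT) (.and (.not a.comp) γE)) w
  | letin (x : String) (e1 e2 : BExp) (φ1 γ1 φ2 γ2 : Form) (n m k : ℕ)
      (w : ℕ → Bool → ℝ)
      (h1 : Comp e1 n m φ1 γ1 w) (h2 : Comp e2 m k φ2 γ2 w) :
      Comp (.letin x e1 e2) n k
        (φ2.psubst x φ1)
        (.and γ1 (γ2.psubst x φ1)) w

/-- The weighted model count of a formula over the flip variables `0, …, n−1`:
`WMC(φ, w) = Σ_{ω ⊨ φ} Π_{l ∈ ω} w(l)`, the sum over all total truth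
assignments of those variables satisfying `φ` of the product of the literal
weights.  (Program variables, which do not occur after substitution, are
evaluated as `false`.) -/
noncomputable def WMC (n : ℕ) (φ : Form) (w : ℕ → Bool → ℝ) : ℝ :=
  ∑ σ : Fin n → Bool,
    if φ.eval (fun i => if h : i < n then σ ⟨i, h⟩ else false) (fun _ => false)
    then ∏ i : Fin n, w i (σ i) else 0

/-- The accepting semantics `⟦e⟧_A = Σ_v ⟦e⟧(v)`. -/
noncomputable def BExp.semA (e : BExp) : ℝ := ∑ v : Bool, e.sem v

/-- The distributional semantics `⟦e⟧_D(v) = ⟦e⟧(v) / ⟦e⟧_A`, defined to be `0`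
when `⟦e⟧_A = 0` (in Lean, real division by zero is zero). -/
noncomputable def BExp.semD (e : BExp) (v : Bool) : ℝ := e.sem v / e.semA

/-! Generalize from `0, …, n - 1` to the block `n, …, m - 1` of flip variables that a subexpression
compiles to: `⟦e[ρ]⟧(v)` is the `w`-weighted sum, over the assignments of that block, of the
indicator of `(φ ⇔ v) ∧ γ` under `ρ`. This is proved by induction on the compilation. The blocks of
the two subexpressions of an `if` or a `let` are disjoint and consecutive, so a weighted sum of a
product of functions of the two blocks factors; in particular a block that does not occur contributes
the factor `w(f) + w(¬f) = 1` per flip variable. For `let x = e₁ in e₂`, summing the product over the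
value `v'` of `x` selects `v' = φ₁`, which is the substitution `φ₂[x ↦ φ₁]`. The accepting
semantics is the sum of these indicators over `v`, i.e. the indicator of `γ`. -/

open Function Set

def blockAssign (lo : ℕ) {d : ℕ} (σ : Fin d → Bool) : ℕ → Bool :=
  fun j => if h : lo ≤ j ∧ j < lo + d then σ ⟨j - lo, by omega⟩ else false

noncomputable def weightedSum (w : ℕ → Bool → ℝ) (lo d : ℕ) (f : (ℕ → Bool) → ℝ) : ℝ :=
  ∑ σ : Fin d → Bool, (∏ i : Fin d, w (lo + i) (σ i)) * f (blockAssign lo σ)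

section WeightedSum

variable {w : ℕ → Bool → ℝ} {lo d d₁ d₂ : ℕ} {f g : (ℕ → Bool) → ℝ}

lemma blockAssign_append_left (σ₁ : Fin d₁ → Bool) (σ₂ : Fin d₂ → Bool) {j : ℕ}
    (hj : j ∈ Ico lo (lo + d₁)) :
    blockAssign lo (Fin.append σ₁ σ₂) j = blockAssign lo σ₁ j := by
  obtain ⟨hlo, hhi⟩ := hj
  have hidx : (⟨j - lo, by omega⟩ : Fin (d₁ + d₂)) = Fin.castAdd d₂ ⟨j - lo, by omega⟩ := rfl
  rw [blockAssign, blockAssign, dif_pos (by omega), dif_pos ⟨hlo, hhi⟩, hidx, Fin.append_left]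

lemma blockAssign_append_right (σ₁ : Fin d₁ → Bool) (σ₂ : Fin d₂ → Bool) {j : ℕ}
    (hj : j ∈ Ico (lo + d₁) (lo + d₁ + d₂)) :
    blockAssign lo (Fin.append σ₁ σ₂) j = blockAssign (lo + d₁) σ₂ j := by
  obtain ⟨hlo, hhi⟩ := hj
  have hidx : (⟨j - lo, by omega⟩ : Fin (d₁ + d₂)) = Fin.natAdd d₁ ⟨j - (lo + d₁), by omega⟩ := by
    ext; simp only [Fin.natAdd_mk]; omega
  rw [blockAssign, blockAssign, dif_pos (by omega), dif_pos ⟨hlo, hhi⟩, hidx, Fin.append_right]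

lemma weightedSum_len_zero : weightedSum w lo 0 f = f fun _ => false := by
  have hσ : ∀ σ : Fin 0 → Bool, blockAssign lo σ = fun _ => false := fun σ => by
    funext j; rw [blockAssign, dif_neg (by omega)]
  simp [weightedSum, hσ]

lemma weightedSum_len_one (g : Bool → ℝ) :
    weightedSum w lo 1 (fun σ => g (σ lo)) = ∑ b, w lo b * g b := by
  rw [weightedSum, ← (Equiv.funUnique (Fin 1) Bool).symm.sum_comp]
  simp [blockAssign]

lemma weightedSum_sum {ι : Type*} (s : Finset ι) (F : ι → (ℕ → Bool) → ℝ) :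
    weightedSum w lo d (fun σ => ∑ i ∈ s, F i σ) = ∑ i ∈ s, weightedSum w lo d (F i) := by
  simp only [weightedSum, Finset.mul_sum]
  exact Finset.sum_comm

lemma weightedSum_const_one (hw : ∀ i ∈ Ico lo (lo + d), w i true + w i false = 1) :
    weightedSum w lo d (fun _ => 1) = 1 := by
  have hprod : ∏ i : Fin d, ∑ b, w (lo + i) b = 1 :=
    Finset.prod_eq_one fun i _ => by
      rw [Fintype.sum_bool]; exact hw _ ⟨by omega, by omega⟩
  simp only [weightedSum, mul_one]
  rw [← Fintype.prod_sum]
  exact hprod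

lemma weightedSum_mul_of_dependsOn (hf : DependsOn f (Ico lo (lo + d₁))) (hg : DependsOn g (Ico (lo + d₁) (lo + d₁ + d₂))) :
    weightedSum w lo (d₁ + d₂) (fun σ => f σ * g σ)
      = weightedSum w lo d₁ f * weightedSum w (lo + d₁) d₂ g := by
  have hterm : ∀ (σ₁ : Fin d₁ → Bool) (σ₂ : Fin d₂ → Bool),
      (∏ i : Fin (d₁ + d₂), w (lo + i) (Fin.append σ₁ σ₂ i))
          * (f (blockAssign lo (Fin.append σ₁ σ₂)) * g (blockAssign lo (Fin.append σ₁ σ₂)))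
        = ((∏ i : Fin d₁, w (lo + i) (σ₁ i)) * f (blockAssign lo σ₁))
          * ((∏ i : Fin d₂, w (lo + d₁ + i) (σ₂ i)) * g (blockAssign (lo + d₁) σ₂)) := by
    intro σ₁ σ₂
    rw [hf fun j hj => blockAssign_append_left σ₁ σ₂ hj,
      hg fun j hj => blockAssign_append_right σ₁ σ₂ hj, Fin.prod_univ_add]
    simp only [Fin.append_left, Fin.append_right, Fin.val_castAdd, Fin.val_natAdd, add_assoc]
    ring
  rw [weightedSum, ← (Fin.appendEquiv d₁ d₂).sum_comp, Fintype.sum_prod_type, weightedSum,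
    weightedSum, Finset.sum_mul_sum]
  exact Finset.sum_congr rfl fun σ₁ _ => Finset.sum_congr rfl fun σ₂ _ => hterm σ₁ σ₂

lemma weightedSum_len_add_of_dependsOn_left (hf : DependsOn f (Ico lo (lo + d₁)))
    (hw : ∀ i ∈ Ico (lo + d₁) (lo + d₁ + d₂), w i true + w i false = 1) :
    weightedSum w lo (d₁ + d₂) f = weightedSum w lo d₁ f := by
  have h := weightedSum_mul_of_dependsOn (w := w) (d₂ := d₂) (g := fun _ => 1) hf
    ((dependsOn_const 1).mono (empty_subset _))
  simpa only [mul_one, weightedSum_const_one hw] using h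

lemma weightedSum_len_add_of_dependsOn_right (hf : DependsOn f (Ico (lo + d₁) (lo + d₁ + d₂)))
    (hw : ∀ i ∈ Ico lo (lo + d₁), w i true + w i false = 1) :
    weightedSum w lo (d₁ + d₂) f = weightedSum w (lo + d₁) d₂ f := by
  have h := weightedSum_mul_of_dependsOn (w := w) (f := fun _ => 1) (g := f)
    ((dependsOn_const 1).mono (empty_subset _)) hf
  simpa only [one_mul, weightedSum_const_one hw] using h

end WeightedSum

namespace Form

def flipVars : Form → Set ℕ
  | .tt => ∅
  | .ff => ∅
  | .fvar i => {i}
  | .pvar _ => ∅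
  | .not φ => φ.flipVars
  | .and φ ψ => φ.flipVars ∪ ψ.flipVars
  | .or φ ψ => φ.flipVars ∪ ψ.flipVars
  | .iff φ ψ => φ.flipVars ∪ ψ.flipVars

lemma dependsOn_eval (ρ : String → Bool) (φ : Form) :
    DependsOn (fun σ => φ.eval σ ρ) φ.flipVars := by
  intro σ σ' h
  induction φ with
  | fvar i => exact h i rfl
  | _ => simp_all [eval, flipVars]

lemma eval_substProg (ρ : String → Bool) (σ : ℕ → Bool) (r : String → Bool) (φ : Form) :
    (φ.substProg ρ).eval σ r = φ.eval σ ρ := by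
  induction φ with
  | pvar x => cases h : ρ x <;> simp [substProg, eval, h]
  | _ => simp_all [substProg, eval]

lemma eval_psubst (x : String) (ψ : Form) (σ : ℕ → Bool) (ρ : String → Bool) (φ : Form) :
    (φ.psubst x ψ).eval σ ρ = φ.eval σ (update ρ x (ψ.eval σ ρ)) := by
  induction φ with
  | pvar y => by_cases hy : y = x <;> simp [psubst, eval, hy]
  | _ => simp_all [psubst, eval]

lemma flipVars_psubst (x : String) (ψ φ : Form) :
    (φ.psubst x ψ).flipVars ⊆ φ.flipVars ∪ ψ.flipVars := by
  induction φ with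
  | pvar y => by_cases hy : y = x <;> simp [psubst, flipVars, hy]
  | _ =>
    simp only [psubst, flipVars] at *
    grind

@[simp]
lemma eval_ofBool (σ : ℕ → Bool) (ρ : String → Bool) (v : Bool) : (ofBool v).eval σ ρ = v := by
  cases v <;> rfl

noncomputable def outcomeIndicator (φ γ : Form) (ρ : String → Bool) (v : Bool)
    (σ : ℕ → Bool) : ℝ :=
  if φ.eval σ ρ = v ∧ γ.eval σ ρ = true then 1 else 0

lemma sum_outcomeIndicator (φ γ : Form) (ρ : String → Bool) (σ : ℕ → Bool) :
    ∑ v, φ.outcomeIndicator γ ρ v σ = if γ.eval σ ρ then 1 else 0 := by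
  rw [Fintype.sum_bool, outcomeIndicator, outcomeIndicator]
  cases φ.eval σ ρ <;> cases γ.eval σ ρ <;> simp

lemma dependsOn_outcomeIndicator {φ γ : Form} {s : Set ℕ} (hφ : φ.flipVars ⊆ s)
    (hγ : γ.flipVars ⊆ s) (ρ : String → Bool) (v : Bool) :
    DependsOn (outcomeIndicator φ γ ρ v) s := by
  intro σ σ' h
  have hφσ : φ.eval σ ρ = φ.eval σ' ρ := (dependsOn_eval ρ φ).mono hφ h
  have hγσ : γ.eval σ ρ = γ.eval σ' ρ := (dependsOn_eval ρ γ).mono hγ h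
  rw [outcomeIndicator, outcomeIndicator, hφσ, hγσ]

end Form

namespace AExp

def val (ρ : String → Bool) : AExp → Bool
  | .const b => b
  | .var x => ρ x

@[simp]
lemma eval_comp (σ : ℕ → Bool) (ρ : String → Bool) (a : AExp) : a.comp.eval σ ρ = a.val ρ := by
  rcases a with (_ | _) | _ <;> rfl

@[simp]
lemma flipVars_comp (a : AExp) : a.comp.flipVars = ∅ := by
  rcases a with (_ | _) | _ <;> rfl

lemma substEnv_some (ρ : String → Bool) (a : AExp) :
    a.substEnv (fun x => some (ρ x)) = .const (a.val ρ) := by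
  cases a <;> rfl

lemma substEnv_substEnv (ρ₁ ρ₂ : String → Option Bool) (a : AExp) :
    (a.substEnv ρ₁).substEnv ρ₂ = a.substEnv (fun y => (ρ₁ y).or (ρ₂ y)) := by
  rcases a with _ | x
  · rfl
  · cases h : ρ₁ x <;> simp [substEnv, h]

end AExp

lemma Form.outcomeIndicator_ite (a : AExp) (φT γT φE γE : Form) (ρ : String → Bool) (v : Bool) :
    (Form.or (.and a.comp φT) (.and (.not a.comp) φE)).outcomeIndicator
        (.or (.and a.comp γT) (.and (.not a.comp) γE)) ρ v
      = if a.val ρ then φT.outcomeIndicator γT ρ v else φE.outcomeIndicator γE ρ v := by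
  funext σ
  cases ha : a.val ρ <;> simp [Form.outcomeIndicator, Form.eval, ha]

lemma Form.outcomeIndicator_psubst (x : String) (φ₁ γ₁ φ₂ γ₂ : Form) (ρ : String → Bool)
    (v : Bool) :
    (φ₂.psubst x φ₁).outcomeIndicator (γ₁.and (γ₂.psubst x φ₁)) ρ v
      = fun σ => ∑ v', φ₁.outcomeIndicator γ₁ ρ v' σ
          * φ₂.outcomeIndicator γ₂ (update ρ x v') v σ := by
  funext σ
  simp only [Form.outcomeIndicator, Form.eval, Form.eval_psubst, Fintype.sum_bool]
  cases φ₁.eval σ ρ <;> cases γ₁.eval σ ρ <;> simp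

lemma BExp.substEnv_substEnv (ρ₁ ρ₂ : String → Option Bool) (e : BExp) :
    (e.substEnv ρ₁).substEnv ρ₂ = e.substEnv (fun y => (ρ₁ y).or (ρ₂ y)) := by
  induction e generalizing ρ₁ ρ₂ with
  | letin x e₁ e₂ ih₁ ih₂ =>
    simp only [BExp.substEnv, ih₁, ih₂]
    congr 2
    funext y
    split_ifs <;> rfl
  | _ =>
    simp only [BExp.substEnv, AExp.substEnv_substEnv, *]

lemma BExp.substEnv_substEnv_bind (x : String) (ρ : String → Bool) (v : Bool) (e : BExp) :
    ((e.substEnv fun y => if y = x then none else some (ρ y)).substEnv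
        fun y => if y = x then some v else none)
      = e.substEnv fun y => some (update ρ x v y) := by
  rw [BExp.substEnv_substEnv]
  congr 1
  funext y
  by_cases hy : y = x <;> simp [hy]

namespace Comp

variable {e : BExp} {n m : ℕ} {φ γ : Form} {w : ℕ → Bool → ℝ}

lemma le (h : Comp e n m φ γ w) : n ≤ m := by
  induction h <;> omega

lemma flipVars_subset (h : Comp e n m φ γ w) : φ.flipVars ⊆ Ico n m ∧ γ.flipVars ⊆ Ico n m := by
  induction h with
  | atom | obs => simp [Form.flipVars]
  | flip => simp [Form.flipVars]
  | ite a eT eE φT γT φE γE n m k w hT hE ihT ihE =>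
    have hnm : Ico n m ⊆ Ico n k := Ico_subset_Ico_right hE.le
    have hmk : Ico m k ⊆ Ico n k := Ico_subset_Ico_left hT.le
    simp only [Form.flipVars, AExp.flipVars_comp, empty_union, union_subset_iff]
    exact ⟨⟨ihT.1.trans hnm, ihE.1.trans hmk⟩, ihT.2.trans hnm, ihE.2.trans hmk⟩
  | letin x e₁ e₂ φ₁ γ₁ φ₂ γ₂ n m k w h₁ h₂ ih₁ ih₂ =>
    have hnm : Ico n m ⊆ Ico n k := Ico_subset_Ico_right h₂.le
    have hmk : Ico m k ⊆ Ico n k := Ico_subset_Ico_left h₁.le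
    simp only [Form.flipVars]
    exact ⟨(Form.flipVars_psubst x φ₁ φ₂).trans (union_subset (ih₂.1.trans hmk) (ih₁.1.trans hnm)),
      union_subset (ih₁.2.trans hnm)
        ((Form.flipVars_psubst x φ₁ γ₂).trans (union_subset (ih₂.2.trans hmk) (ih₁.1.trans hnm)))⟩

lemma weight_add_eq_one (h : Comp e n m φ γ w) :
    ∀ i ∈ Ico n m, w i true + w i false = 1 := by
  induction h with
  | atom | obs => simp
  | flip θ n w _ _ hwt hwf =>
    intro i hi
    obtain rfl : i = n := by simp at hi; omega
    rw [hwt, hwf, add_sub_cancel]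
  | ite _ _ _ _ _ _ _ _ _ _ _ h₁ h₂ ih₁ ih₂ | letin _ _ _ _ _ _ _ _ _ _ _ h₁ h₂ ih₁ ih₂ =>
    rw [← Ico_union_Ico_eq_Ico h₁.le h₂.le]
    rintro i (hi | hi)
    exacts [ih₁ i hi, ih₂ i hi]

lemma dependsOn_outcomeIndicator (h : Comp e n m φ γ w) (ρ : String → Bool) (v : Bool) :
    DependsOn (φ.outcomeIndicator γ ρ v) (Ico n m) :=
  Form.dependsOn_outcomeIndicator h.flipVars_subset.1 h.flipVars_subset.2 ρ v

theorem sem_substEnv (h : Comp e n m φ γ w) (ρ : String → Bool) (v : Bool) :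
    (e.substEnv (fun x => some (ρ x))).sem v
      = weightedSum w n (m - n) (φ.outcomeIndicator γ ρ v) := by
  induction h generalizing ρ v with
  | atom a n w | obs a n w =>
    rw [Nat.sub_self, weightedSum_len_zero]
    cases ha : a.val ρ <;> cases v <;>
      simp [BExp.substEnv, AExp.substEnv_some, BExp.sem, Form.outcomeIndicator, Form.eval, ha]
  | flip θ n w _ _ hwt hwf =>
    rw [Nat.add_sub_cancel_left]
    change _ = weightedSum w n 1 (fun σ => if σ n = v ∧ true = true then 1 else 0)
    rw [weightedSum_len_one (fun b => if b = v ∧ true = true then 1 else 0)]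
    cases v <;> simp [BExp.substEnv, BExp.sem, hwt, hwf]
  | ite a eT eE φT γT φE γE n m k w hT hE ihT ihE =>
    obtain ⟨d₁, rfl⟩ := Nat.exists_eq_add_of_le hT.le
    obtain ⟨d₂, rfl⟩ := Nat.exists_eq_add_of_le hE.le
    rw [show n + d₁ + d₂ - n = d₁ + d₂ by omega]
    simp only [Nat.add_sub_cancel_left] at ihT ihE
    simp only [BExp.substEnv, AExp.substEnv_some]
    rw [Form.outcomeIndicator_ite]
    cases a.val ρ
    · rw [if_neg Bool.false_ne_true, weightedSum_len_add_of_dependsOn_right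
        (hE.dependsOn_outcomeIndicator ρ v) hT.weight_add_eq_one, ← ihE]
      simp [BExp.sem]
    · rw [if_pos rfl, weightedSum_len_add_of_dependsOn_left
        (hT.dependsOn_outcomeIndicator ρ v) hE.weight_add_eq_one, ← ihT]
      simp [BExp.sem]
  | letin x e₁ e₂ φ₁ γ₁ φ₂ γ₂ n m k w h₁ h₂ ih₁ ih₂ =>
    obtain ⟨d₁, rfl⟩ := Nat.exists_eq_add_of_le h₁.le
    obtain ⟨d₂, rfl⟩ := Nat.exists_eq_add_of_le h₂.le
    rw [show n + d₁ + d₂ - n = d₁ + d₂ by omega]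
    simp only [Nat.add_sub_cancel_left] at ih₁ ih₂
    rw [BExp.substEnv, BExp.sem, Form.outcomeIndicator_psubst, weightedSum_sum]
    refine Finset.sum_congr rfl fun v' _ => ?_
    rw [BExp.substEnv_substEnv_bind, ih₁, ih₂, weightedSum_mul_of_dependsOn
      (h₁.dependsOn_outcomeIndicator ρ v') (h₂.dependsOn_outcomeIndicator _ v)]

end Comp

lemma WMC_eq_weightedSum (n : ℕ) (φ : Form) (w : ℕ → Bool → ℝ) :
    WMC n φ w = weightedSum w 0 n (fun σ => if φ.eval σ (fun _ => false) then 1 else 0) := by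
  have hσ : ∀ σ : Fin n → Bool,
      (fun i => if h : i < n then σ ⟨i, h⟩ else false) = blockAssign 0 σ := fun σ => by
    funext i; simp [blockAssign]
  simp only [WMC, weightedSum, hσ, zero_add, mul_ite, mul_one, mul_zero]

/-- **Boolean Expression Correctness.**  If a Boolean Dice expression `e` with
free variables among `x1, …, xn` compiles as `e ⤳ (φ, γ, w)`, then for any
Boolean values `v1, …, vn` (given by the environment `ρ`):
(1) the accepting semantics satisfies `⟦e[xi ↦ vi]⟧_A = WMC(γ[xi ↦ vi], w)`;
(2) for any Boolean value `v`, the distributional semantics satisfies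
`⟦e[xi ↦ vi]⟧_D(v) = WMC(((φ ⇔ v) ∧ γ)[xi ↦ vi], w) / WMC(γ[xi ↦ vi], w)`,
where a quotient with zero denominator is defined to be `0`. -/
theorem boolean_expression_correctness
    (e : BExp) (n : ℕ) (φ γ : Form) (w : ℕ → Bool → ℝ)
    (h : Comp e 0 n φ γ w) (ρ : String → Bool) :
    (e.substEnv (fun x => some (ρ x))).semA = WMC n (γ.substProg ρ) w
    ∧ ∀ v : Bool,
        (e.substEnv (fun x => some (ρ x))).semD v
          = WMC n (((φ.iff (Form.ofBool v)).and γ).substProg ρ) w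
            / WMC n (γ.substProg ρ) w := by
  have hsem (v : Bool) : (e.substEnv (fun x => some (ρ x))).sem v
      = weightedSum w 0 n (φ.outcomeIndicator γ ρ v) := by
    rw [h.sem_substEnv ρ v, Nat.sub_zero]
  have hWMC (v : Bool) : WMC n (((φ.iff (Form.ofBool v)).and γ).substProg ρ) w
      = weightedSum w 0 n (φ.outcomeIndicator γ ρ v) := by
    rw [WMC_eq_weightedSum]
    congr 1; funext σ
    simp [Form.outcomeIndicator, Form.eval, Form.eval_substProg]
  have hA : (e.substEnv (fun x => some (ρ x))).semA = WMC n (γ.substProg ρ) w := by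
    rw [BExp.semA, Finset.sum_congr rfl fun v _ => hsem v, ← weightedSum_sum, WMC_eq_weightedSum]
    simp only [Form.sum_outcomeIndicator, Form.eval_substProg]
  exact ⟨hA, fun v => by rw [BExp.semD, hA, hsem, hWMC]⟩
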